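/- arXiv:1002.0145 — 2 statements merged into one kernel-verified Lean document; each statement's English description precedes it below -/
import Mathlib

section
/- Let f_1,...,f_m be multiplication terms in R = F[x_1,...,x_n] generating an ideal I, let ℓ be a linear form with ℓ ∉ radsp(f_1,...,f_m), and let g ∈ R. Then ℓ·g ∈ I if and only if g ∈ I. -/
open MvPolynomial

noncomputable section

namespace SGPaper

variable {F : Type*}

/-- The linear form with coefficient vector `v`. -/
def toForm [Field F] {n : ℕ} (v : Fin n → F) : MvPolynomial (Fin n) F :=
  ∑ i, MvPolynomial.C (v i) * MvPolynomial.X i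

/-- A multiplication term `c · ∏_{ℓ ∈ S} ℓ`. -/
def mTerm [Field F] {n : ℕ} (c : F) (S : Multiset (Fin n → F)) : MvPolynomial (Fin n) F :=
  MvPolynomial.C c * (S.map toForm).prod

/-- The `F`-linear span of the forms in the multiset `S` (radical span). -/
def radsp (F : Type*) [Field F] {n : ℕ} (S : Multiset (Fin n → F)) :
    Submodule F (Fin n → F) :=
  Submodule.span F {v | v ∈ S}

/-- `b ∈ F^* · a + K`, i.e. `b` is similar to `a` modulo the subspace `K`. -/
def simRel [Field F] {n : ℕ} (K : Submodule F (Fin n → F)) (a b : Fin n → F) : Prop :=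
  ∃ c : F, c ≠ 0 ∧ b - c • a ∈ K

/-- A `K`-matching between two multisets of linear forms: a bijection `π` with
`π(ℓ) ∈ F^*·ℓ + K` for all `ℓ`. -/
def KMatching [Field F] {n : ℕ} (K : Submodule F (Fin n → F))
    (A B : Multiset (Fin n → F)) : Prop :=
  Multiset.Rel (simRel K) A B

/-- No element of `S` is a scalar multiple of another element of `S`. -/
def MultipleFree [Field F] {n : ℕ} (S : Finset (Fin n → F)) : Prop :=
  ∀ v ∈ S, ∀ w ∈ S, ∀ c : F, w = c • v → w = v

/-- `S` is `SG_k`-closed: it consists of nonzero vectors, is multiple-free, and the span of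
any `k` linearly independent vectors of `S` contains at least `k+1` vectors of `S`. -/
def SGClosed (F : Type*) [Field F] (k : ℕ) {n : ℕ} (S : Finset (Fin n → F)) : Prop :=
  (∀ v ∈ S, v ≠ 0) ∧ MultipleFree S ∧
    ∀ V : Finset (Fin n → F), V ⊆ S → V.card = k →
      LinearIndependent F (fun v : (V : Set (Fin n → F)) => (v : Fin n → F)) →
      k + 1 ≤ ((S : Set (Fin n → F)) ∩
        (Submodule.span F (V : Set (Fin n → F)) : Set (Fin n → F))).ncard

/-- The rank of a finite set of vectors. -/
def sgRank (F : Type*) [Field F] {n : ℕ} (S : Finset (Fin n → F)) : ℕ :=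
  Module.finrank F (Submodule.span F (S : Set (Fin n → F)))

/-- `SG_k(F, m)`: the largest possible rank of an `SG_k`-closed set of at most `m`
vectors in `F^n`, over all `n`. -/
def SGBound (F : Type*) [Field F] (k m : ℕ) : ℕ :=
  sSup {r | ∃ n : ℕ, ∃ S : Finset (Fin n → F), SGClosed F k S ∧ S.card ≤ m ∧ r = sgRank F S}

/-- The polynomial computed by a multiplication gate of a depth-3 circuit. -/
def circTerm [Field F] {n d : ℕ} (c : F) (v : Fin d → Fin n → F) : MvPolynomial (Fin n) F :=
  MvPolynomial.C c * ∏ j, toForm (v j)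

/-- The multiset `L(T_i)` of linear forms of the `i`-th gate. -/
def Lmul {F : Type*} {n k d : ℕ} (ℓ : Fin k → Fin d → Fin n → F) (i : Fin k) :
    Multiset (Fin n → F) :=
  Multiset.map (ℓ i) Finset.univ.val

/-- The circuit is simple: no nonzero linear form divides all the gates. -/
def IsSimple [Field F] {n k d : ℕ} (c : Fin k → F) (ℓ : Fin k → Fin d → Fin n → F) : Prop :=
  ¬ ∃ v : Fin n → F, v ≠ 0 ∧ ∀ i, toForm v ∣ circTerm (c i) (ℓ i)

/-- The circuit is minimal: no nonempty proper subset of the gates sums to zero. -/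
def IsMinimal [Field F] {n k d : ℕ} (c : Fin k → F) (ℓ : Fin k → Fin d → Fin n → F) : Prop :=
  ∀ S : Finset (Fin k), S.Nonempty → S ≠ Finset.univ →
    ∑ i ∈ S, circTerm (c i) (ℓ i) ≠ 0

/-- The rank of a depth-3 circuit: the rank of all the linear forms occurring in it. -/
def circRank (F : Type*) [Field F] {n k d : ℕ} (ℓ : Fin k → Fin d → Fin n → F) : ℕ :=
  Module.finrank F (Submodule.span F (Set.range fun p : Fin k × Fin d => ℓ p.1 p.2))

open Classical in
/-- `M(L_K(T_i))`: the product of the forms of the gate lying in the subspace `K`. -/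
def nucTerm [Field F] {n d : ℕ} (K : Submodule F (Fin n → F)) (v : Fin d → Fin n → F) :
    MvPolynomial (Fin n) F :=
  ∏ j ∈ Finset.univ.filter (fun j => v j ∈ K), toForm (v j)

/-- A partition `P` splits `S` if some class meets `S` but does not contain it. -/
def Splits {U : Type*} [DecidableEq U] {s : Finset U} (P : Finpartition s)
    (S : Finset U) : Prop :=
  ∃ X ∈ P.parts, (X ∩ S).Nonempty ∧ ¬ S ⊆ X




/-!
If `ℓ·g = ∑ hᵢ fᵢ`, pick a functional `L` with `L ℓ = 1` vanishing on `radsp(f₁,…,fₘ)` and let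
`φ` be the substitution induced by the projection `v ↦ v - L(v)·ℓ` onto `ker L`. It kills `ℓ`,
fixes every `fᵢ` and is the identity modulo `ℓ`. Applying it gives `0 = ∑ φ(hᵢ) fᵢ`, so
`ℓ·g = ∑ (hᵢ - φ hᵢ) fᵢ` where each `hᵢ - φ hᵢ` is divisible by `ℓ`, and `ℓ` cancels.
-/

section Cancellation

variable {R : Type*} [CommRing R]

lemma _root_.Ideal.exists_sub_eq_mul_of_mem_span (φ : R →+* R) {a : R} (hφ : ∀ p, a ∣ p - φ p)
    {s : Set R} (hs : ∀ x ∈ s, φ x = x) {x : R} (hx : x ∈ Ideal.span s) :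
    ∃ y ∈ Ideal.span s, x - φ x = a * y := by
  induction hx using Submodule.span_induction with
  | mem x hx => exact ⟨0, zero_mem _, by rw [hs x hx, sub_self, mul_zero]⟩
  | zero => exact ⟨0, zero_mem _, by simp⟩
  | add x y _ _ hx hy =>
    obtain ⟨x', hx', hx⟩ := hx
    obtain ⟨y', hy', hy⟩ := hy
    exact ⟨x' + y', add_mem hx' hy', by rw [map_add, mul_add, ← hx, ← hy]; ring⟩
  | smul r x hxs hx =>
    obtain ⟨x', hx', hx⟩ := hx
    obtain ⟨r', hr⟩ := hφ r
    -- `r x - φ r φ x = (r - φ r) x + φ r (x - φ x)`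
    refine ⟨r' * x + φ r * x',
      add_mem (Ideal.mul_mem_left _ _ hxs) (Ideal.mul_mem_left _ _ hx'), ?_⟩
    rw [smul_eq_mul, map_mul, mul_add, ← mul_assoc, ← hr, mul_left_comm, ← hx]
    ring

lemma _root_.Ideal.mem_span_of_mul_mem_span [IsDomain R] (φ : R →+* R) {a : R} (ha : a ≠ 0)
    (hφa : φ a = 0) (hφ : ∀ p, a ∣ p - φ p) {s : Set R} (hs : ∀ x ∈ s, φ x = x) {g : R}
    (hg : a * g ∈ Ideal.span s) : g ∈ Ideal.span s := by
  obtain ⟨y, hy, hgy⟩ := Ideal.exists_sub_eq_mul_of_mem_span φ hφ hs hg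
  rw [map_mul, hφa, zero_mul, sub_zero] at hgy
  rwa [mul_left_cancel₀ ha hgy]

end Cancellation

lemma _root_.Submodule.exists_dual_eq_one_of_notMem {K V : Type*} [Field K] [AddCommGroup V]
    [Module K V] {p : Submodule K V} {x : V} (hx : x ∉ p) :
    ∃ L : Module.Dual K V, L x = 1 ∧ ∀ v ∈ p, L v = 0 := by
  obtain ⟨f, hfx, hfp⟩ := p.exists_dual_map_eq_bot_of_notMem hx inferInstance
  refine ⟨(f x)⁻¹ • f, inv_mul_cancel₀ hfx, fun v hv => ?_⟩
  have : f v ∈ p.map f := Submodule.mem_map_of_mem hv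
  simp_all

section Forms

variable [Field F] {n : ℕ}

lemma toForm_eq_linearCombination (v : Fin n → F) :
    toForm v = Fintype.linearCombination F (X : Fin n → MvPolynomial (Fin n) F) v := by
  simp [toForm, Fintype.linearCombination_apply, smul_eq_C_mul]

lemma toForm_ne_zero {v : Fin n → F} (hv : v ≠ 0) : toForm v ≠ 0 := by
  rw [toForm_eq_linearCombination]
  exact ((linearIndependent_X (R := F) (σ := Fin n)).fintypeLinearCombination_injective.ne_iff'
    (map_zero _)).2 hv

def substForm (P : (Fin n → F) →ₗ[F] (Fin n → F)) :
    MvPolynomial (Fin n) F →ₐ[F] MvPolynomial (Fin n) F :=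
  aeval fun i => toForm (P (Pi.single i 1))

lemma substForm_toForm (P : (Fin n → F) →ₗ[F] (Fin n → F)) (v : Fin n → F) :
    substForm P (toForm v) = toForm (P v) := by
  have h : (substForm P).toLinearMap ∘ₗ Fintype.linearCombination F X =
      Fintype.linearCombination F X ∘ₗ P := LinearMap.pi_ext fun i a => by
    rw [← mul_one a, ← smul_eq_mul, Pi.single_smul, map_smul, map_smul]
    simp [substForm, toForm_eq_linearCombination]
  simpa [toForm_eq_linearCombination] using LinearMap.congr_fun h v

lemma substForm_mTerm (P : (Fin n → F) →ₗ[F] (Fin n → F)) (c : F) {T : Multiset (Fin n → F)}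
    (hT : ∀ v ∈ T, P v = v) : substForm P (mTerm c T) = mTerm c T := by
  simp only [mTerm, map_mul, algHom_C, map_multiset_prod, Multiset.map_map]
  congr 2
  exact Multiset.map_congr rfl fun v hv => by simp [substForm_toForm, hT v hv]

lemma toForm_dvd_sub_substForm (L : Module.Dual F (Fin n → F)) (w : Fin n → F)
    (p : MvPolynomial (Fin n) F) :
    toForm w ∣ p - substForm (LinearMap.id - L.smulRight w) p := by
  rw [← Ideal.mem_span_singleton, ← Ideal.Quotient.mk_eq_mk_iff_sub_mem]
  suffices (Ideal.Quotient.mkₐ F _).comp (substForm (LinearMap.id - L.smulRight w)) =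
      Ideal.Quotient.mkₐ F (Ideal.span {toForm w}) from (AlgHom.congr_fun this p).symm
  refine algHom_ext fun i => ?_
  rw [AlgHom.comp_apply, Ideal.Quotient.mkₐ_eq_mk, Ideal.Quotient.eq,
    Ideal.mem_span_singleton]
  have hX : (X i : MvPolynomial (Fin n) F) = toForm (Pi.single i 1) := by
    simp [toForm_eq_linearCombination]
  rw [hX, substForm_toForm]
  simp only [toForm_eq_linearCombination, ← map_sub, LinearMap.sub_apply, LinearMap.id_apply,
    LinearMap.smulRight_apply, sub_sub_cancel_left, map_neg, map_smul]
  exact ⟨-C (L (Pi.single i 1)), by simp [smul_eq_C_mul, mul_comm]⟩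

end Forms

theorem linear_form_non_zerodivisor_general {F : Type*} [Field F] {n m : ℕ}
    (c : Fin m → F) (S : Fin m → Multiset (Fin n → F))
    (w : Fin n → F) (hw : w ∉ radsp F (∑ i, S i))
    (g : MvPolynomial (Fin n) F) :
    toForm w * g ∈ Ideal.span (Set.range fun i => mTerm (c i) (S i)) ↔
      g ∈ Ideal.span (Set.range fun i => mTerm (c i) (S i)) := by
  refine ⟨fun h => ?_, Ideal.mul_mem_left _ _⟩
  obtain ⟨L, hLw, hLS⟩ := Submodule.exists_dual_eq_one_of_notMem hw
  have hw0 : w ≠ 0 := by rintro rfl; simp at hLw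
  refine Ideal.mem_span_of_mul_mem_span (substForm (LinearMap.id - L.smulRight w)).toRingHom
    (toForm_ne_zero hw0) ?_ (toForm_dvd_sub_substForm L w) ?_ h
  · rw [AlgHom.toRingHom_eq_coe, RingHom.coe_coe, substForm_toForm]
    simp [hLw, toForm]
  · rintro _ ⟨i, rfl⟩
    refine substForm_mTerm _ _ fun v hv => ?_
    have hLv : L v = 0 :=
      hLS v (Submodule.subset_span (Multiset.mem_sum.2 ⟨i, Finset.mem_univ _, hv⟩))
    simp [hLv]

/-- **Non-zerodivisor.** If `ℓ ∉ radsp(f_1,...,f_m)` then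
`ℓ·g ∈ ⟨f_1,...,f_m⟩ ↔ g ∈ ⟨f_1,...,f_m⟩`. -/
theorem linear_form_non_zerodivisor {F : Type*} [Field F] {n m : ℕ}
    (c : Fin m → F) (S : Fin m → Multiset (Fin n → F))
    (hc : ∀ i, c i ≠ 0) (hS : ∀ i, ∀ v ∈ S i, v ≠ 0)
    (w : Fin n → F) (hw : w ∉ radsp F (∑ i, S i))
    (g : MvPolynomial (Fin n) F) :
    toForm w * g ∈ Ideal.span (Set.range fun i => mTerm (c i) (S i)) ↔
      g ∈ Ideal.span (Set.range fun i => mTerm (c i) (S i)) :=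
  linear_form_non_zerodivisor_general c S w hw g

end SGPaper
end
end

section
/- Let C = T_1 + ... + T_k be a ΣΠΣ(k,d) identity over a field F, and let K be a linear subspace of the space of linear forms such that for every i ∈ {1,...,k} there is a K-matching between L(T_1) and L(T_i). Then the multiplication terms M(L_K(T_i)) (the products of the forms of L(T_i) lying in K), for i ∈ {1,...,k}, all have the same degree d', and there exist α_1,...,α_k ∈ F* such that Σ_{i=1}^k α_i·M(L_K(T_i)) = 0. -/
open MvPolynomial

noncomputable section

namespace SGPaper

variable {F : Type*}

/-!
Choose a linear map `π` with kernel `K` and substitute `x ↦ x + t • π x` in the variables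
(`deform π`): a form in `K` is unchanged and a form `ℓ ∉ K` becomes `ℓ + t • π ℓ`. A `K`-matching
preserves membership in `K`, so every gate has the same number `e` of forms outside `K`, and the
coefficient of `t ^ e` in the image of `T_i` is `c_i · M(L_K(T_i)) · ∏_{ℓ ∉ K} π ℓ`. Under `π` a
`K`-matching becomes a matching up to nonzero scalars, so these last products are nonzero
multiples of one nonzero polynomial; cancelling it from the coefficient of `t ^ e` in the
identity gives the nucleus identity.
-/

open Finset
open LinearMap (ker)

section

variable [Field F] {n : ℕ}

theorem toForm_single (m : Fin n) (a : F) : toForm (Pi.single m a) = C a * X m := by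
  simp [toForm, Pi.single_apply, apply_ite C, ite_mul]

theorem toForm_add (v w : Fin n → F) : toForm (v + w) = toForm v + toForm w := by
  simp [toForm, add_mul, sum_add_distrib]

theorem toForm_smul (a : F) (v : Fin n → F) : toForm (a • v) = C a * toForm v := by
  simp [toForm, mul_sum, mul_assoc]

@[simps]
def toFormₗ : (Fin n → F) →ₗ[F] MvPolynomial (Fin n) F where
  toFun := toForm
  map_add' := toForm_add
  map_smul' a v := by simp [toForm_smul, smul_eq_C_mul]

theorem toForm_eq_zero_iff {v : Fin n → F} : toForm v = 0 ↔ v = 0 := by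
  refine ⟨fun h => funext fun m => ?_, fun h => by simp [h, toForm]⟩
  simpa [toForm, Pi.single_apply] using congrArg (eval (Pi.single m 1)) h

theorem exists_linearMap_ker_eq (K : Submodule F (Fin n → F)) :
    ∃ π : (Fin n → F) →ₗ[F] (Fin n → F), ker π = K := by
  obtain ⟨W, hW⟩ := K.exists_isCompl
  exact ⟨W.projection K hW.symm, by ext v; simp⟩

end

theorem _root_.Multiset.Rel.filter {α β : Type*} {r : α → β → Prop} {p : α → Prop}
    {q : β → Prop} [DecidablePred p] [DecidablePred q] (hpq : ∀ a b, r a b → (p a ↔ q b))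
    {s : Multiset α} {t : Multiset β} (h : Multiset.Rel r s t) :
    Multiset.Rel r (s.filter p) (t.filter q) := by
  induction h with
  | zero => simp
  | @cons a b s t hab _ ih =>
    by_cases hpa : p a
    · rw [Multiset.filter_cons_of_pos _ hpa, Multiset.filter_cons_of_pos _ ((hpq a b hab).1 hpa)]
      exact ih.cons hab
    · rw [Multiset.filter_cons_of_neg _ hpa,
        Multiset.filter_cons_of_neg _ (mt (hpq a b hab).2 hpa)]
      exact ih

section

variable [Field F] {n : ℕ} {K : Submodule F (Fin n → F)}

theorem simRel.mem_iff {a b : Fin n → F} (h : simRel K a b) : a ∈ K ↔ b ∈ K := by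
  obtain ⟨c, hc, hba⟩ := h
  rw [← K.smul_mem_iff hc]
  exact ⟨fun ha => by simpa using K.add_mem hba ha, fun hb => by simpa using K.sub_mem hb hba⟩

variable {A B : Multiset (Fin n → F)}

theorem KMatching.filter_mem [DecidablePred (· ∈ K)] (h : KMatching K A B) :
    KMatching K (A.filter (· ∈ K)) (B.filter (· ∈ K)) :=
  Multiset.Rel.filter (fun _ _ hab => hab.mem_iff) h

theorem KMatching.filter_not_mem [DecidablePred (· ∈ K)] (h : KMatching K A B) :
    KMatching K (A.filter (· ∉ K)) (B.filter (· ∉ K)) :=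
  Multiset.Rel.filter (fun _ _ hab => not_congr hab.mem_iff) h

theorem KMatching.exists_prod_map_eq {π : (Fin n → F) →ₗ[F] (Fin n → F)}
    (h : KMatching (ker π) A B) :
    ∃ γ : F, γ ≠ 0 ∧
      (B.map fun v => toForm (π v)).prod = C γ * (A.map fun v => toForm (π v)).prod := by
  induction h with
  | zero => exact ⟨1, one_ne_zero, by simp⟩
  | @cons a b s t hab _ ih =>
    obtain ⟨γ, hγ, hst⟩ := ih
    obtain ⟨e, he, hba⟩ := hab
    have hπb : π b = e • π a := by simpa [sub_eq_zero] using hba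
    refine ⟨e * γ, mul_ne_zero he hγ, ?_⟩
    simp only [Multiset.map_cons, Multiset.prod_cons, hst, hπb, toForm_smul, map_mul]
    ring

end

section

variable [Field F] {n : ℕ} (π : (Fin n → F) →ₗ[F] (Fin n → F))

def deform : MvPolynomial (Fin n) F →ₐ[F] Polynomial (MvPolynomial (Fin n) F) :=
  aeval fun m => Polynomial.C (toForm (π (Pi.single m 1))) * Polynomial.X + Polynomial.C (X m)

theorem deform_toForm (v : Fin n → F) :
    deform π (toForm v) =
      Polynomial.C (toForm (π v)) * Polynomial.X + Polynomial.C (toForm v) := by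
  let Cₗ := (Polynomial.CAlgHom : MvPolynomial (Fin n) F →ₐ[F] _).toLinearMap
  have hlin : (deform π).toLinearMap ∘ₗ toFormₗ =
      LinearMap.mulRight F Polynomial.X ∘ₗ Cₗ ∘ₗ toFormₗ ∘ₗ π + Cₗ ∘ₗ toFormₗ := by
    refine LinearMap.pi_ext fun m a => ?_
    have hsingle : Pi.single m a = a • Pi.single m (1 : F) := by
      ext j; simp [Pi.single_apply]
    simp only [hsingle, map_smul]
    simp [Cₗ, deform, toForm_single]
  exact LinearMap.congr_fun hlin v

theorem deform_toForm_of_mem_ker {v : Fin n → F} (hv : v ∈ ker π) :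
    deform π (toForm v) = Polynomial.C (toForm v) := by
  simp [deform_toForm, LinearMap.mem_ker.1 hv, toForm_eq_zero_iff]

theorem coeff_deform_prod_toForm {ι : Type*} (s : Finset ι) (u : ι → Fin n → F) :
    (deform π (∏ j ∈ s, toForm (u j))).coeff #s = ∏ j ∈ s, toForm (π (u j)) := by
  rw [map_prod, ← mul_one #s, Polynomial.coeff_prod_of_natDegree_le s _ 1 fun j _ => ?_]
  · simp [deform_toForm]
  · rw [deform_toForm]
    exact Polynomial.natDegree_linear_le

open scoped Classical in
theorem coeff_deform_circTerm {d e : ℕ} (c : F) (v : Fin d → Fin n → F)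
    (he : #{j | v j ∉ ker π} = e) :
    (deform π (circTerm c v)).coeff e =
      C c * nucTerm (ker π) v * ∏ j with v j ∉ ker π, toForm (π (v j)) := by
  subst he
  have hnuc : deform π (nucTerm (ker π) v) = Polynomial.C (nucTerm (ker π) v) := by
    rw [nucTerm, map_prod, map_prod]
    exact prod_congr rfl fun j hj => deform_toForm_of_mem_ker π (mem_filter.1 hj).2
  have hsplit : ∏ j, toForm (v j) = nucTerm (ker π) v * ∏ j with v j ∉ ker π, toForm (v j) :=
    (prod_filter_mul_prod_filter_not _ _ _).symm
  rw [circTerm, hsplit, ← mul_assoc, map_mul, map_mul, hnuc, MvPolynomial.algHom_C,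
    Polynomial.algebraMap_apply, MvPolynomial.algebraMap_eq, ← Polynomial.C_mul,
    Polynomial.coeff_C_mul, coeff_deform_prod_toForm]

end

section

variable {n k d : ℕ} (ℓ : Fin k → Fin d → Fin n → F) (i : Fin k) (p : (Fin n → F) → Prop)
  [DecidablePred p]

theorem card_filter_Lmul : ((Lmul ℓ i).filter p).card = #{j | p (ℓ i j)} := by
  rw [Lmul, Multiset.filter_map, Multiset.card_map]
  rfl

theorem prod_map_filter_Lmul {R : Type*} [CommMonoid R] (f : (Fin n → F) → R) :
    (((Lmul ℓ i).filter p).map f).prod = ∏ j with p (ℓ i j), f (ℓ i j) := by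
  rw [Lmul, Multiset.filter_map, Multiset.map_map]
  rfl

end

open scoped Classical in
theorem nucleus_identity_general {F : Type*} [Field F] {n k d : ℕ} (hk : 0 < k)
    (c : Fin k → F) (ℓ : Fin k → Fin d → Fin n → F)
    (hc : ∀ i, c i ≠ 0)
    (hzero : ∑ i, circTerm (c i) (ℓ i) = 0)
    (K : Submodule F (Fin n → F))
    (hmatch : ∀ i : Fin k, KMatching K (Lmul ℓ ⟨0, hk⟩) (Lmul ℓ i)) :
    (∃ d' : ℕ, ∀ i : Fin k,
      (Finset.univ.filter fun j => ℓ i j ∈ K).card = d') ∧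
    ∃ α : Fin k → F, (∀ i, α i ≠ 0) ∧ ∑ i, α i • nucTerm K (ℓ i) = 0 := by
  obtain ⟨π, rfl⟩ := exists_linearMap_ker_eq K
  set i₀ : Fin k := ⟨0, hk⟩
  have hin : ∀ i, #{j | ℓ i j ∈ ker π} = #{j | ℓ i₀ j ∈ ker π} := fun i => by
    simpa only [card_filter_Lmul] using
      (Multiset.card_eq_card_of_rel (hmatch i).filter_mem).symm
  have hout : ∀ i, #{j | ℓ i j ∉ ker π} = #{j | ℓ i₀ j ∉ ker π} := fun i => by
    simpa only [card_filter_Lmul] using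
      (Multiset.card_eq_card_of_rel (hmatch i).filter_not_mem).symm
  refine ⟨⟨_, hin⟩, ?_⟩
  set P := ∏ j with ℓ i₀ j ∉ ker π, toForm (π (ℓ i₀ j))
  have hP : P ≠ 0 :=
    prod_ne_zero_iff.2 fun j hj => toForm_eq_zero_iff.not.2 (mem_filter.1 hj).2
  have hscale : ∀ i, ∃ γ : F, γ ≠ 0 ∧ ∏ j with ℓ i j ∉ ker π, toForm (π (ℓ i j)) = C γ * P :=
    fun i => by
      simpa only [prod_map_filter_Lmul] using (hmatch i).filter_not_mem.exists_prod_map_eq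
  choose γ hγ hscale using hscale
  refine ⟨fun i => c i * γ i, fun i => mul_ne_zero (hc i) (hγ i), mul_left_injective₀ hP ?_⟩
  have hcoeff := congrArg (fun p => (deform π p).coeff #{j | ℓ i₀ j ∉ ker π}) hzero
  simp only [map_sum, Polynomial.finsetSum_coeff, coeff_deform_circTerm _ _ _ (hout _), hscale,
    map_zero, Polynomial.coeff_zero] at hcoeff
  simp only [sum_mul, zero_mul, smul_eq_C_mul, map_mul]
  rw [← hcoeff]
  exact sum_congr rfl fun i _ => by ring

open scoped Classical in
/-- **Nucleus identity.** If `C = T_1 + ... + T_k` is a `ΣΠΣ(k,d)` identity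
and `K` is a subspace `K`-matching `L(T_1)` to every `L(T_i)`, then the terms
`M(L_K(T_i))` all have the same degree `d'` and satisfy an identity
`Σ_i α_i·M(L_K(T_i)) = 0` with all `α_i ∈ F^*`. -/
theorem nucleus_identity {F : Type*} [Field F] {n k d : ℕ} (hk : 0 < k)
    (c : Fin k → F) (ℓ : Fin k → Fin d → Fin n → F)
    (hc : ∀ i, c i ≠ 0) (hℓ : ∀ i j, ℓ i j ≠ 0)
    (hzero : ∑ i, circTerm (c i) (ℓ i) = 0)
    (K : Submodule F (Fin n → F))
    (hmatch : ∀ i : Fin k, KMatching K (Lmul ℓ ⟨0, hk⟩) (Lmul ℓ i)) :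
    (∃ d' : ℕ, ∀ i : Fin k,
      (Finset.univ.filter fun j => ℓ i j ∈ K).card = d') ∧
    ∃ α : Fin k → F, (∀ i, α i ≠ 0) ∧ ∑ i, α i • nucTerm K (ℓ i) = 0 :=
  nucleus_identity_general hk c ℓ hc hzero K hmatch

end SGPaper
end
end
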